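/- arXiv:2511.15519 — 6 statements merged into one kernel-verified Lean document; each statement's English description precedes it below -/
import Mathlib

section
/- Let p, a, b ∈ ℂ with |p| < 1 and a ≠ 0, b ≠ 0, and let ω = exp(2πi/3). Then (∑_{m,n∈ℤ} ω^{m−n} p^{3(m²+mn+n²+m+n)+1} a^{3m+1} b^{3n+1})³ + (∑_{m,n∈ℤ} p^{3(m²+mn+n²)} a^{3m} b^{3n})³ = (∑_{m,n∈ℤ} ω^{m−n} p^{3(m²+mn+n²)} a^{3m} b^{3n})³ + (∑_{m,n∈ℤ} p^{3(m²+mn+n²+m+n)+1} a^{3m+1} b^{3n+1})³. (This is Schultz's two-variable generalization of Borweins' cubic identity, written with q = p³, x = a³, y = b³ to clear the fractional exponents q^{(m+1/3)²+(m+1/3)(n+1/3)+(n+1/3)²} x^{m+1/3} y^{n+1/3} = p^{3(m²+mn+n²+m+n)+1} a^{3m+1} b^{3n+1}.) -/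
/-!
Write `A`, `C` for the untwisted double sums and `B`, `D` for their `ω`-twisted versions; the
claim is `A³ - B³ = C³ - D³`. Expanding the cubes, `A³ - B³ = ∑ (1 - ω ^ s t) F t` and
`C³ - D³ = ∑ (1 - ω ^ s t) G t` over triples `t` of lattice points, where `F`, `G` are products of
three summands and `s t = ∑ (mᵢ - nᵢ)` is the total charge; the weight vanishes when `3 ∣ s t`.

In exponent coordinates `(x, y) = (3m, 3n)` (for `A`) or `(3m + 1, 3n + 1)` (for `C`) a summand
is `p ^ ((x² + xy + y²) / 3) * a ^ x * b ^ y`. Rotating a triple by a third of a turn about its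
centroid preserves `∑ xᵢ`, `∑ yᵢ` and `∑ (xᵢ² + xᵢyᵢ + yᵢ²)`, hence the charge and the product of
the summands. For `s t ≡ 1` mod `3` the rotation in one direction, for `s t ≡ 2` the rotation in
the other, carries `A`-triples bijectively onto `C`-triples, so `F t = G (matching t)` whenever
`3 ∤ s t`.
-/

open Complex

lemma summable_zpow_sq_mul_zpow {r : ℝ} (hr0 : 0 < r) (hr1 : r < 1) {c : ℝ} (hc : 0 < c) :
    Summable fun n : ℤ => r ^ (n ^ 2) * c ^ n := by
  have hτ : 0 < (((-Real.log r / Real.pi : ℝ) : ℂ) * I).im := by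
    simpa using div_pos (neg_pos.mpr (Real.log_neg hr0 hr1)) Real.pi_pos
  refine ((summable_jacobiTheta₂_term_iff (((-Real.log c / (2 * Real.pi) : ℝ) : ℂ) * I) _).mpr
    hτ).norm.congr fun n => ?_
  rw [norm_jacobiTheta₂_term, mul_I_im, mul_I_im, ofReal_re, ofReal_re, ← Real.rpow_intCast,
    ← Real.rpow_intCast, Real.rpow_def_of_pos hr0, Real.rpow_def_of_pos hc, ← Real.exp_add]
  congr 1
  field_simp
  push_cast
  ring

section TripleProducts

variable {ι : Type*}

def tripleProd {M : Type*} [Mul M] (f : ι → M) (t : ι × ι × ι) : M := f t.1 * (f t.2.1 * f t.2.2)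

lemma tsum_pow_three {R : Type*} [NormedRing R] [CompleteSpace R] {f : ι → R}
    (hf : Summable (‖f ·‖)) : (∑' i, f i) ^ 3 = ∑' t, tripleProd f t := by
  rw [pow_three, tsum_mul_tsum_of_summable_norm hf hf,
    tsum_mul_tsum_of_summable_norm hf (hf.mul_norm hf)]
  rfl

lemma summable_tripleProd {R : Type*} [NormedRing R] [CompleteSpace R] {f : ι → R}
    (hf : Summable (‖f ·‖)) : Summable (tripleProd f) :=
  (hf.mul_norm (hf.mul_norm hf)).of_norm

variable {K : Type*} [NormedField K] {f : ι → K} {ω : K}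

lemma summable_norm_zpow_mul (hω : ‖ω‖ = 1) (χ : ι → ℤ) (hf : Summable (‖f ·‖)) :
    Summable fun i => ‖ω ^ χ i * f i‖ := by
  simpa [norm_mul, norm_zpow, hω] using hf

lemma tsum_pow_three_sub_tsum_zpow_mul_pow_three [CompleteSpace K] (hω : ‖ω‖ = 1) (χ : ι → ℤ)
    (hf : Summable (‖f ·‖)) :
    (∑' i, f i) ^ 3 - (∑' i, ω ^ χ i * f i) ^ 3 =
      ∑' t : ι × ι × ι, (1 - ω ^ (χ t.1 + χ t.2.1 + χ t.2.2)) * tripleProd f t := by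
  have hω0 : ω ≠ 0 := norm_ne_zero_iff.mp (by rw [hω]; exact one_ne_zero)
  have hg := summable_norm_zpow_mul hω χ hf
  rw [tsum_pow_three hf, tsum_pow_three hg,
    ← (summable_tripleProd hf).tsum_sub (summable_tripleProd hg)]
  congr 1 with t
  simp only [tripleProd, zpow_add₀ hω0]
  ring

end TripleProducts

def fiberwisePerm {α β : Type*} (f : α → β) (σ : β → Equiv.Perm α)
    (hσ : ∀ b x, f (σ b x) = f x) : Equiv.Perm α where
  toFun x := σ (f x) x
  invFun x := (σ (f x)).symm x
  left_inv x := by simp only [hσ, Equiv.symm_apply_apply]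
  right_inv x := by
    have h : f ((σ (f x)).symm x) = f x := by simpa using (hσ (f x) ((σ (f x)).symm x)).symm
    simp only [h, Equiv.apply_symm_apply]

namespace Schultz

def hexNorm (v : ℤ × ℤ) : ℤ := v.1 ^ 2 + v.1 * v.2 + v.2 ^ 2

lemma hexNorm_nonneg (v : ℤ × ℤ) : 0 ≤ hexNorm v := by
  unfold hexNorm
  nlinarith [sq_nonneg (v.1 + v.2)]

lemma sq_add_sq_le_two_mul_hexNorm (v : ℤ × ℤ) : v.1 ^ 2 + v.2 ^ 2 ≤ 2 * hexNorm v := by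
  unfold hexNorm
  nlinarith [sq_nonneg (v.1 + v.2)]

lemma summable_zpow_hexNorm_mul {r : ℝ} (hr0 : 0 < r) (hr1 : r < 1) {x y : ℝ} (hx : 0 < x)
    (hy : 0 < y) : Summable fun v : ℤ × ℤ => r ^ hexNorm v * x ^ v.1 * y ^ v.2 := by
  set s := √r
  have hs0 : 0 < s := Real.sqrt_pos.mpr hr0
  have hs1 : s < 1 := (Real.sqrt_lt' one_pos).mpr (by simpa using hr1)
  refine Summable.of_nonneg_of_le (fun v => by positivity) (fun v => ?_)
    ((summable_zpow_sq_mul_zpow hs0 hs1 hx).mul_of_nonneg (summable_zpow_sq_mul_zpow hs0 hs1 hy)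
      (fun _ => by positivity) (fun _ => by positivity))
  have hr : r ^ hexNorm v ≤ s ^ (v.1 ^ 2) * s ^ (v.2 ^ 2) := by
    rw [← zpow_add₀ hs0.ne', ← Real.sq_sqrt hr0.le, ← zpow_natCast, ← zpow_mul]
    exact zpow_le_zpow_right_of_le_one₀ hs0 hs1.le (by simpa using sq_add_sq_le_two_mul_hexNorm v)
  calc r ^ hexNorm v * x ^ v.1 * y ^ v.2
      ≤ s ^ (v.1 ^ 2) * s ^ (v.2 ^ 2) * x ^ v.1 * y ^ v.2 := by gcongr
    _ = s ^ (v.1 ^ 2) * x ^ v.1 * (s ^ (v.2 ^ 2) * y ^ v.2) := by ring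

section Monomials

variable {K : Type*} [Field K] {p a b : K}

def monomial (p a b : K) (e x y : ℤ) : K := p ^ e * a ^ x * b ^ y

-- Nonnegative `p`-exponents take the place of `p ≠ 0`, so that `p = 0` is no special case.
lemma monomial_mul_monomial (ha : a ≠ 0) (hb : b ≠ 0) {e e' x x' y y' : ℤ} (he : 0 ≤ e)
    (he' : 0 ≤ e') :
    monomial p a b e x y * monomial p a b e' x' y' = monomial p a b (e + e') (x + x') (y + y') := by
  have hp : p ^ (e + e') = p ^ e * p ^ e' := zpow_add' (Or.inr (by omega))
  simp only [monomial, hp, zpow_add₀ ha, zpow_add₀ hb]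
  ring

end Monomials

section Terms

variable {K : Type*}

def termA [Field K] (p a b : K) (v : ℤ × ℤ) : K :=
  monomial p a b (3 * hexNorm v) (3 * v.1) (3 * v.2)

def termC [Field K] (p a b : K) (v : ℤ × ℤ) : K :=
  monomial p a b (3 * (hexNorm v + v.1 + v.2) + 1) (3 * v.1 + 1) (3 * v.2 + 1)

lemma termC_exponent_nonneg (v : ℤ × ℤ) : 0 ≤ 3 * (hexNorm v + v.1 + v.2) + 1 := by
  unfold hexNorm
  nlinarith [sq_nonneg (v.1 - v.2), sq_nonneg (v.1 + v.2 + 1)]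

variable [NormedField K] {p a b : K}

lemma summable_norm_termA (hp : ‖p‖ < 1) (ha : a ≠ 0) (hb : b ≠ 0) :
    Summable (‖termA p a b ·‖) := by
  set ρ := max ‖p‖ (1 / 2)
  have hρ0 : 0 < ρ := lt_max_of_lt_right (by norm_num)
  have hρ1 : ρ < 1 := max_lt hp (by norm_num)
  refine Summable.of_nonneg_of_le (fun _ => norm_nonneg _) (fun v => ?_)
    (summable_zpow_hexNorm_mul (r := ρ ^ (3 : ℤ)) (x := ‖a‖ ^ (3 : ℤ)) (y := ‖b‖ ^ (3 : ℤ))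
      (by positivity) (by simpa using pow_lt_one₀ hρ0.le hρ1 three_ne_zero) (by positivity)
      (by positivity))
  calc ‖termA p a b v‖ = ‖p‖ ^ (3 * hexNorm v) * ‖a‖ ^ (3 * v.1) * ‖b‖ ^ (3 * v.2) := by
        simp only [termA, monomial, norm_mul, norm_zpow]
    _ ≤ ρ ^ (3 * hexNorm v) * ‖a‖ ^ (3 * v.1) * ‖b‖ ^ (3 * v.2) := by
        gcongr
        exact zpow_le_zpow_left₀ (by linarith [hexNorm_nonneg v]) (norm_nonneg p) (le_max_left _ _)
    _ = (ρ ^ (3 : ℤ)) ^ hexNorm v * (‖a‖ ^ (3 : ℤ)) ^ v.1 * (‖b‖ ^ (3 : ℤ)) ^ v.2 := by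
        simp only [zpow_mul]

lemma summable_norm_termC (hp : ‖p‖ < 1) (ha : a ≠ 0) (hb : b ≠ 0) :
    Summable (‖termC p a b ·‖) := by
  set ρ := max ‖p‖ (1 / 2)
  have hρ0 : 0 < ρ := lt_max_of_lt_right (by norm_num)
  have hρ1 : ρ < 1 := max_lt hp (by norm_num)
  have ha' : 0 < ‖a‖ := norm_pos_iff.mpr ha
  have hb' : 0 < ‖b‖ := norm_pos_iff.mpr hb
  refine Summable.of_nonneg_of_le (fun _ => norm_nonneg _) (fun v => ?_)
    ((summable_zpow_hexNorm_mul (r := ρ ^ (3 : ℤ)) (x := ρ ^ (3 : ℤ) * ‖a‖ ^ (3 : ℤ))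
      (y := ρ ^ (3 : ℤ) * ‖b‖ ^ (3 : ℤ)) (by positivity)
      (by simpa using pow_lt_one₀ hρ0.le hρ1 three_ne_zero) (by positivity)
      (by positivity)).mul_left (ρ * ‖a‖ * ‖b‖))
  calc ‖termC p a b v‖
        = ‖p‖ ^ (3 * (hexNorm v + v.1 + v.2) + 1) * ‖a‖ ^ (3 * v.1 + 1) * ‖b‖ ^ (3 * v.2 + 1) := by
        simp only [termC, monomial, norm_mul, norm_zpow]
    _ ≤ ρ ^ (3 * (hexNorm v + v.1 + v.2) + 1) * ‖a‖ ^ (3 * v.1 + 1) * ‖b‖ ^ (3 * v.2 + 1) := by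
        gcongr
        exact zpow_le_zpow_left₀ (termC_exponent_nonneg v) (norm_nonneg p) (le_max_left _ _)
    _ = ρ * ‖a‖ * ‖b‖ * ((ρ ^ (3 : ℤ)) ^ hexNorm v * (ρ ^ (3 : ℤ) * ‖a‖ ^ (3 : ℤ)) ^ v.1 *
          (ρ ^ (3 : ℤ) * ‖b‖ ^ (3 : ℤ)) ^ v.2) := by
        simp only [mul_zpow, ← zpow_mul, zpow_add₀ hρ0.ne', zpow_add₀ ha'.ne', zpow_add₀ hb'.ne',
          zpow_one, mul_add]
        ring

end Terms

abbrev Triple := (ℤ × ℤ) × (ℤ × ℤ) × (ℤ × ℤ)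

def charge (v : ℤ × ℤ) : ℤ := v.1 - v.2

def tripleCharge (t : Triple) : ℤ := charge t.1 + charge t.2.1 + charge t.2.2

-- Each point is turned by `(m, n) ↦ (n, -m - n)`, then all are translated alike; when
-- `tripleCharge t = 3 * c + 1` this is, in exponent coordinates, the rotation about the centroid.
def turn (c : ℤ) : Equiv.Perm Triple where
  toFun t :=
    let n := t.1.2 + t.2.1.2 + t.2.2.2
    let r := fun v : ℤ × ℤ => (v.2 + c, n + c - v.1 - v.2)
    (r t.1, r t.2.1, r t.2.2)
  invFun t :=
    let m := t.1.1 + t.2.1.1 + t.2.2.1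
    let r := fun v : ℤ × ℤ => (m - c - v.1 - v.2, v.1 - c)
    (r t.1, r t.2.1, r t.2.2)
  left_inv := by
    rintro ⟨⟨m₁, n₁⟩, ⟨m₂, n₂⟩, ⟨m₃, n₃⟩⟩
    simp only [Prod.mk.injEq]
    refine ⟨⟨?_, ?_⟩, ⟨?_, ?_⟩, ⟨?_, ?_⟩⟩ <;> ring
  right_inv := by
    rintro ⟨⟨m₁, n₁⟩, ⟨m₂, n₂⟩, ⟨m₃, n₃⟩⟩
    simp only [Prod.mk.injEq]
    refine ⟨⟨?_, ?_⟩, ⟨?_, ?_⟩, ⟨?_, ?_⟩⟩ <;> ring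

lemma tripleCharge_turn (c : ℤ) (t : Triple) : tripleCharge (turn c t) = tripleCharge t := by
  simp only [turn, tripleCharge, charge, Equiv.coe_fn_mk]
  ring

lemma tripleCharge_turn_symm (c : ℤ) (t : Triple) :
    tripleCharge ((turn c).symm t) = tripleCharge t := by
  simpa using (tripleCharge_turn c ((turn c).symm t)).symm

def turnByCharge (s : ℤ) : Equiv.Perm Triple :=
  if s % 3 = 1 then turn (s / 3) else if s % 3 = 2 then (turn (s / 3 + 1)).symm else 1

lemma tripleCharge_turnByCharge (s : ℤ) (t : Triple) :
    tripleCharge (turnByCharge s t) = tripleCharge t := by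
  unfold turnByCharge
  split_ifs <;> simp [tripleCharge_turn, tripleCharge_turn_symm]

def matching : Equiv.Perm Triple :=
  fiberwisePerm tripleCharge turnByCharge tripleCharge_turnByCharge

section Matching

variable {K : Type*} [Field K] {p a b : K}

lemma tripleProd_termA (ha : a ≠ 0) (hb : b ≠ 0) (t : Triple) :
    tripleProd (termA p a b) t =
      monomial p a b (3 * (hexNorm t.1 + hexNorm t.2.1 + hexNorm t.2.2))
        (3 * (t.1.1 + t.2.1.1 + t.2.2.1)) (3 * (t.1.2 + t.2.1.2 + t.2.2.2)) := by
  have h := hexNorm_nonneg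
  simp only [tripleProd, termA]
  rw [monomial_mul_monomial ha hb (by linarith [h t.2.1]) (by linarith [h t.2.2]),
    monomial_mul_monomial ha hb (by linarith [h t.1]) (by linarith [h t.2.1, h t.2.2])]
  congr 1 <;> ring

lemma tripleProd_termC (ha : a ≠ 0) (hb : b ≠ 0) (t : Triple) :
    tripleProd (termC p a b) t =
      monomial p a b (3 * (hexNorm t.1 + hexNorm t.2.1 + hexNorm t.2.2 + t.1.1 + t.2.1.1 + t.2.2.1
          + t.1.2 + t.2.1.2 + t.2.2.2 + 1))
        (3 * (t.1.1 + t.2.1.1 + t.2.2.1 + 1)) (3 * (t.1.2 + t.2.1.2 + t.2.2.2 + 1)) := by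
  have h := termC_exponent_nonneg
  simp only [tripleProd, termC]
  rw [monomial_mul_monomial ha hb (h t.2.1) (h t.2.2),
    monomial_mul_monomial ha hb (h t.1) (by linarith [h t.2.1, h t.2.2])]
  congr 1 <;> ring

lemma tripleProd_termA_eq_termC_turn (ha : a ≠ 0) (hb : b ≠ 0) {t : Triple} {d : ℤ}
    (h : tripleCharge t = 3 * d + 1) :
    tripleProd (termA p a b) t = tripleProd (termC p a b) (turn d t) := by
  rw [tripleProd_termA ha hb, tripleProd_termC ha hb]
  obtain ⟨⟨m₁, n₁⟩, ⟨m₂, n₂⟩, ⟨m₃, n₃⟩⟩ := t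
  obtain rfl : m₃ = 3 * d + 1 - m₁ - m₂ + n₁ + n₂ + n₃ := by
    simp only [tripleCharge, charge] at h
    linarith
  simp only [turn, hexNorm, Equiv.coe_fn_mk]
  congr 1 <;> ring

lemma tripleProd_termA_eq_termC_turn_symm (ha : a ≠ 0) (hb : b ≠ 0) {t : Triple} {d : ℤ}
    (h : tripleCharge t = 3 * d + 2) :
    tripleProd (termA p a b) t = tripleProd (termC p a b) ((turn (d + 1)).symm t) := by
  rw [tripleProd_termA ha hb, tripleProd_termC ha hb]
  obtain ⟨⟨m₁, n₁⟩, ⟨m₂, n₂⟩, ⟨m₃, n₃⟩⟩ := t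
  obtain rfl : m₃ = 3 * d + 2 - m₁ - m₂ + n₁ + n₂ + n₃ := by
    simp only [tripleCharge, charge] at h
    linarith
  simp only [turn, hexNorm, Equiv.coe_fn_symm_mk]
  congr 1 <;> ring

lemma tripleProd_termA_eq_termC_matching (ha : a ≠ 0) (hb : b ≠ 0) {t : Triple}
    (h : ¬ 3 ∣ tripleCharge t) :
    tripleProd (termA p a b) t = tripleProd (termC p a b) (matching t) := by
  have hmatching : matching t = turnByCharge (tripleCharge t) t := rfl
  unfold turnByCharge at hmatching
  split_ifs at hmatching
  · rw [hmatching]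
    exact tripleProd_termA_eq_termC_turn ha hb (by omega)
  · rw [hmatching]
    exact tripleProd_termA_eq_termC_turn_symm ha hb (by omega)
  · omega

lemma tsum_tripleProd_termA_eq_tsum_tripleProd_termC [TopologicalSpace K] {ω : K}
    (hω : ω ^ 3 = 1) (ha : a ≠ 0) (hb : b ≠ 0) :
    ∑' t : Triple, (1 - ω ^ tripleCharge t) * tripleProd (termA p a b) t =
      ∑' t : Triple, (1 - ω ^ tripleCharge t) * tripleProd (termC p a b) t := by
  refine (tsum_congr fun t => ?_).trans
    (matching.tsum_eq fun t => (1 - ω ^ tripleCharge t) * tripleProd (termC p a b) t)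
  rw [show tripleCharge (matching t) = tripleCharge t from tripleCharge_turnByCharge _ t]
  by_cases h : 3 ∣ tripleCharge t
  · obtain ⟨k, hk⟩ := h
    rw [hk, zpow_mul, zpow_ofNat, hω, one_zpow, sub_self, zero_mul, zero_mul]
  · rw [tripleProd_termA_eq_termC_matching ha hb h]

end Matching

end Schultz

open Schultz

/-- Schultz's two-variable generalization of Borweins' cubic identity
(written with `q = p³`, `x = a³`, `y = b³` to clear fractional exponents). -/
theorem schultz_identity (p a b ω : ℂ) (hp : ‖p‖ < 1)
    (ha : a ≠ 0) (hb : b ≠ 0)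
    (hω : ω = Complex.exp (2 * Real.pi * Complex.I / 3)) :
    (∑' m : ℤ, ∑' n : ℤ, ω ^ (m - n) *
        p ^ (3 * (m ^ 2 + m * n + n ^ 2 + m + n) + 1) * a ^ (3 * m + 1) * b ^ (3 * n + 1)) ^ 3
      + (∑' m : ℤ, ∑' n : ℤ,
          p ^ (3 * (m ^ 2 + m * n + n ^ 2)) * a ^ (3 * m) * b ^ (3 * n)) ^ 3
      = (∑' m : ℤ, ∑' n : ℤ, ω ^ (m - n) *
          p ^ (3 * (m ^ 2 + m * n + n ^ 2)) * a ^ (3 * m) * b ^ (3 * n)) ^ 3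
        + (∑' m : ℤ, ∑' n : ℤ,
            p ^ (3 * (m ^ 2 + m * n + n ^ 2 + m + n) + 1) * a ^ (3 * m + 1) * b ^ (3 * n + 1)) ^ 3 := by
  have hω3 : ω ^ 3 = 1 := by
    simpa [hω] using (Complex.isPrimitiveRoot_exp 3 (by norm_num)).pow_eq_one
  have hω1 : ‖ω‖ = 1 := norm_eq_one_of_pow_eq_one hω3 three_ne_zero
  have hA := summable_norm_termA hp ha hb
  have hC := summable_norm_termC hp ha hb
  have key := (tsum_pow_three_sub_tsum_zpow_mul_pow_three hω1 charge hA).trans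
    ((tsum_tripleProd_termA_eq_tsum_tripleProd_termC hω3 ha hb).trans
      (tsum_pow_three_sub_tsum_zpow_mul_pow_three hω1 charge hC).symm)
  rw [hA.of_norm.tsum_prod, hC.of_norm.tsum_prod,
    (summable_norm_zpow_mul hω1 charge hA).of_norm.tsum_prod,
    (summable_norm_zpow_mul hω1 charge hC).of_norm.tsum_prod] at key
  simp only [termA, termC, monomial, hexNorm, charge, mul_assoc] at key ⊢
  linear_combination key
end

section
/- Let q ∈ ℂ with |q| < 1 and ω = exp(2πi/3). Then ∑_{m,n∈ℤ} ω^{m−n} q^{m²+mn+n²+m+n} = 0. -/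
/-!
The substitution `(m, n) ↦ (n, -m - n - 1)` is a bijection of `ℤ × ℤ` that preserves the
exponent `m² + mn + n² + m + n` and shifts `m - n` by `3n + 1`, so it multiplies each term
by `ω`. Hence the (absolutely convergent) sum `S` satisfies `S = ω S`, and `ω ≠ 1` forces
`S = 0`.
-/

open Complex

theorem tsum_eq_zero_of_equiv_mul {α K : Type*} [Field K] [TopologicalSpace K]
    [IsTopologicalRing K] [T2Space K] {f : α → K} (e : α ≃ α) {c : K} (hc : c ≠ 1)
    (hf : ∀ a, f (e a) = c * f a) : ∑' a, f a = 0 := by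
  have hfix : ∑' a, f a = c * ∑' a, f a :=
    calc ∑' a, f a = ∑' a, f (e a) := (e.tsum_eq f).symm
      _ = ∑' a, c * f a := tsum_congr hf
      _ = c * ∑' a, f a := tsum_mul_left
  have hmul : (1 - c) * ∑' a, f a = 0 := by linear_combination hfix
  exact (mul_eq_zero.mp hmul).resolve_left (sub_ne_zero.mpr hc.symm)

theorem summable_pow_of_natAbs_add_natAbs_le {r : ℝ} (hr0 : 0 ≤ r) (hr1 : r < 1)
    {E : ℤ × ℤ → ℕ} (C : ℕ) (hE : ∀ p, p.1.natAbs + p.2.natAbs ≤ E p + C) :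
    Summable fun p => r ^ E p := by
  -- The base is raised to `max r (1/2)` so that `s ^ C` can be divided out.
  set s := max r (1 / 2)
  have hs0 : 0 < s := lt_max_of_lt_right (by norm_num)
  have hs1 : s < 1 := max_lt hr1 (by norm_num)
  have hint : Summable fun m : ℤ => s ^ m.natAbs := by
    apply Summable.of_nat_of_neg <;> simpa using summable_geometric_of_lt_one hs0.le hs1
  have hprod : Summable fun p : ℤ × ℤ => s ^ p.1.natAbs * s ^ p.2.natAbs :=
    hint.mul_of_nonneg hint (fun _ => by positivity) (fun _ => by positivity)
  refine Summable.of_nonneg_of_le (fun _ => by positivity) (fun p => ?_)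
    (hprod.mul_left (s⁻¹ ^ C))
  calc r ^ E p ≤ s ^ E p := pow_le_pow_left₀ hr0 (le_max_left _ _) _
    _ = s⁻¹ ^ C * s ^ (E p + C) := by
        rw [pow_add, inv_pow, mul_comm, mul_inv_cancel_right₀ (by positivity)]
    _ ≤ s⁻¹ ^ C * s ^ (p.1.natAbs + p.2.natAbs) :=
        mul_le_mul_of_nonneg_left (pow_le_pow_of_le_one hs0.le hs1.le (hE p)) (by positivity)
    _ = s⁻¹ ^ C * (s ^ p.1.natAbs * s ^ p.2.natAbs) := by rw [pow_add]

def borweinForm (p : ℤ × ℤ) : ℤ :=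
  p.1 ^ 2 + p.1 * p.2 + p.2 ^ 2 + p.1 + p.2

theorem borweinForm_nonneg (p : ℤ × ℤ) : 0 ≤ borweinForm p := by
  have h : 0 ≤ 12 * borweinForm p + 4 := by
    unfold borweinForm
    nlinarith [sq_nonneg (2 * p.1 + p.2 + 1), sq_nonneg (3 * p.2 + 1)]
  omega

theorem abs_add_abs_le_borweinForm (p : ℤ × ℤ) : |p.1| + |p.2| ≤ borweinForm p + 4 := by
  unfold borweinForm
  nlinarith [sq_nonneg (|p.1| - 2), sq_nonneg (|p.2| - 2), sq_nonneg (p.1 + p.2), sq_abs p.1,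
    sq_abs p.2, le_abs_self p.1, le_abs_self p.2]

def borweinRotation : ℤ × ℤ ≃ ℤ × ℤ where
  toFun p := (p.2, -p.1 - p.2 - 1)
  invFun p := (-p.1 - p.2 - 1, p.1)
  left_inv := by rintro ⟨m, n⟩; simp only [Prod.mk.injEq, and_true]; ring
  right_inv := by rintro ⟨m, n⟩; simp only [Prod.mk.injEq, true_and]; ring

theorem borweinForm_rotation (p : ℤ × ℤ) :
    borweinForm (borweinRotation p) = borweinForm p := by
  simp only [borweinForm, borweinRotation, Equiv.coe_fn_mk]
  ring

def borweinTerm {K : Type*} [Field K] (ω q : K) (p : ℤ × ℤ) : K :=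
  ω ^ (p.1 - p.2) * q ^ borweinForm p

theorem borweinTerm_rotation {K : Type*} [Field K] {ω : K} (hω : ω ^ 3 = 1) (q : K)
    (p : ℤ × ℤ) : borweinTerm ω q (borweinRotation p) = ω * borweinTerm ω q p := by
  have hω0 : ω ≠ 0 := by rintro rfl; norm_num at hω
  have hshift : ω ^ (3 * p.2 + 1) = ω := by
    rw [zpow_add_one₀ hω0, zpow_mul, zpow_ofNat, hω, one_zpow, one_mul]
  have hexp : (borweinRotation p).1 - (borweinRotation p).2 = (p.1 - p.2) + (3 * p.2 + 1) := by
    simp only [borweinRotation, Equiv.coe_fn_mk]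
    ring
  rw [borweinTerm, borweinTerm, borweinForm_rotation, hexp, zpow_add₀ hω0, hshift]
  ring

theorem summable_borweinTerm {ω q : ℂ} (hω : ‖ω‖ = 1) (hq : ‖q‖ < 1) :
    Summable (borweinTerm ω q) := by
  have hnorm (p : ℤ × ℤ) : ‖borweinTerm ω q p‖ = ‖q‖ ^ (borweinForm p).toNat := by
    rw [borweinTerm, norm_mul, norm_zpow, norm_zpow, hω, one_zpow, one_mul, ← zpow_natCast,
      Int.toNat_of_nonneg (borweinForm_nonneg p)]
  refine Summable.of_norm ?_
  simp only [hnorm]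
  refine summable_pow_of_natAbs_add_natAbs_le (norm_nonneg q) hq 4 fun p => ?_
  have := abs_add_abs_le_borweinForm p
  rw [← Int.natCast_natAbs, ← Int.natCast_natAbs] at this
  omega

/-- The theta series `∑ ω^{m-n} q^{m²+mn+n²+m+n}` vanishes identically. -/
theorem borwein_zero_sum (q ω : ℂ) (hq : ‖q‖ < 1)
    (hω : ω = Complex.exp (2 * Real.pi * Complex.I / 3)) :
    (∑' m : ℤ, ∑' n : ℤ, ω ^ (m - n) * q ^ (m ^ 2 + m * n + n ^ 2 + m + n)) = 0 := by
  have hprim : IsPrimitiveRoot ω 3 := by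
    simpa [hω] using Complex.isPrimitiveRoot_exp 3 (by norm_num)
  have hsum := summable_borweinTerm (hprim.norm'_eq_one (by norm_num)) hq
  calc (∑' m : ℤ, ∑' n : ℤ, ω ^ (m - n) * q ^ (m ^ 2 + m * n + n ^ 2 + m + n))
      = ∑' p, borweinTerm ω q p := (hsum.tsum_prod' hsum.prod_factor).symm
    _ = 0 := tsum_eq_zero_of_equiv_mul borweinRotation (hprim.ne_one (by norm_num))
        (borweinTerm_rotation hprim.pow_eq_one q)
end

section
/- Let p, a, b ∈ ℂ with |p| < 1 and a ≠ 0, b ≠ 0. Then (∑_{m,n∈ℤ} (−1)^{m+n} p^{2(m²+n²+m+n)+1} a^{2m+1} b^{2n+1})² + (∑_{m,n∈ℤ} p^{2(m²+n²)} a^{2m} b^{2n})² = (∑_{m,n∈ℤ} p^{2(m²+n²+m+n)+1} a^{2m+1} b^{2n+1})² + (∑_{m,n∈ℤ} (−1)^{m+n} p^{2(m²+n²)} a^{2m} b^{2n})². (This is the two-variable generalization of Jacobi's identity, written with q = p², x = a², y = b² to clear the fractional exponents q^{(m+1/2)²+(n+1/2)²} x^{m+1/2} y^{n+1/2} = p^{2(m²+n²+m+n)+1}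 a^{2m+1} b^{2n+1}.) -/
/-!
Split `ℤ²` into the sublattice `{m + n even}` and its complement and substitute
`(m, n) = (r + s, r - s)`, shifted by a point of the complement on the second piece. Since
`(r + s)² + (r - s)² = 2r² + 2s²`, each piece factors into a product of one-variable theta
series evaluated at `ab` and `a / b`: with `E` the even and `O` the odd such series, the four
double series are `E E ± p² O O` and `p (O E ± E O)`. The alternating series are the plain ones
at `(i a, i b)`, which sends `ab` to `-ab` and so flips the sign of `O`. The identity is then
`(x - y)² + (u + v)² = (x + y)² + (u - v)²` with `x y = u v = p² E E O O`.
-/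

open Complex Filter Topology

theorem summable_pow_sq_mul_pow {ρ : ℝ} (h0 : 0 ≤ ρ) (h1 : ρ < 1) (t : ℝ) :
    Summable fun n : ℕ => ρ ^ (n ^ 2) * t ^ n := by
  have hlim : Tendsto (fun n : ℕ => ρ ^ n * |t|) atTop (𝓝 0) := by
    simpa using (tendsto_pow_atTop_nhds_zero_of_lt_one h0 h1).mul_const |t|
  refine .of_norm_bounded_eventually_nat summable_geometric_two ?_
  filter_upwards [hlim.eventually (eventually_le_nhds (by norm_num : (0 : ℝ) < 1 / 2))] with n hn
  calc ‖ρ ^ (n ^ 2) * t ^ n‖ = (ρ ^ n * |t|) ^ n := by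
        rw [norm_mul, norm_pow, norm_pow, Real.norm_of_nonneg h0, Real.norm_eq_abs, mul_pow,
          ← pow_mul, sq]
    _ ≤ (1 / 2) ^ n := by gcongr

theorem summable_norm_zpow_sq_mul_zpow {𝕜 : Type*} [NormedDivisionRing 𝕜] {q : 𝕜}
    (hq : ‖q‖ < 1) (z : 𝕜) : Summable fun n : ℤ => ‖q ^ (n ^ 2) * z ^ n‖ := by
  refine .of_nat_of_neg ?_ ?_
  · refine (summable_pow_sq_mul_pow (norm_nonneg q) hq ‖z‖).congr fun n => ?_
    rw [norm_mul, norm_zpow, norm_zpow, ← Nat.cast_pow, zpow_natCast, zpow_natCast]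
  · refine (summable_pow_sq_mul_pow (norm_nonneg q) hq ‖z‖⁻¹).congr fun n => ?_
    rw [norm_mul, norm_zpow, norm_zpow, neg_sq, ← Nat.cast_pow, zpow_natCast, zpow_neg,
      zpow_natCast, inv_pow]

theorem hasSum_mul_of_summable_norm {ι κ R : Type*} [NormedRing R] [CompleteSpace R]
    {f : ι → R} {g : κ → R} (hf : Summable fun x => ‖f x‖) (hg : Summable fun y => ‖g y‖) :
    HasSum (fun x : ι × κ => f x.1 * g x.2) ((∑' x, f x) * ∑' y, g y) := by
  rw [tsum_mul_tsum_of_summable_norm hf hg]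
  exact (summable_mul_of_summable_norm hf hg).hasSum

theorem HasSum.tsum_tsum_eq {α β E : Type*} [NormedAddCommGroup E] [CompleteSpace E]
    {f : α × β → E} {S : E} (h : HasSum f S) : ∑' a, ∑' b, f (a, b) = S :=
  h.summable.tsum_prod.symm.trans h.tsum_eq

def latticeCoset (c d : ℤ) (x : ℤ × ℤ) : ℤ × ℤ := (x.1 + x.2 + c, x.1 - x.2 + d)

theorem latticeCoset_injective (c d : ℤ) : Function.Injective (latticeCoset c d) := by
  rintro ⟨r, s⟩ ⟨r', s'⟩ h
  simp only [latticeCoset, Prod.mk.injEq] at h ⊢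
  omega

theorem range_latticeCoset (c d : ℤ) :
    Set.range (latticeCoset c d) = {x | Even (x.1 + x.2 + c + d)} := by
  ext ⟨m, n⟩
  simp only [Set.mem_range, Set.mem_ofPred_eq, latticeCoset, Prod.mk.injEq, Prod.exists]
  constructor
  · rintro ⟨r, s, rfl, rfl⟩
    exact ⟨r + c + d, by ring⟩
  · rintro ⟨k, hk⟩
    exact ⟨k - c - d, m - k + d, by omega, by omega⟩

theorem isCompl_range_latticeCoset {c d : ℤ} (h : Odd (c + d)) :
    IsCompl (Set.range (latticeCoset 0 0)) (Set.range (latticeCoset c d)) := by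
  have hcompl : {x : ℤ × ℤ | Even (x.1 + x.2 + c + d)} = {x | Even (x.1 + x.2 + 0 + 0)}ᶜ := by
    ext x
    rw [Set.mem_ofPred_eq, add_assoc, Int.even_add,
      iff_false_intro (Int.not_even_iff_odd.mpr h)]
    simp
  rw [range_latticeCoset, range_latticeCoset, hcompl]
  exact isCompl_compl

theorem HasSum.add_latticeCoset {α : Type*} [AddCommMonoid α] [TopologicalSpace α]
    [ContinuousAdd α] {F : ℤ × ℤ → α} {S T : α} {c d : ℤ} (h : Odd (c + d))
    (h₀ : HasSum (F ∘ latticeCoset 0 0) S) (h₁ : HasSum (F ∘ latticeCoset c d) T) :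
    HasSum F (S + T) :=
  ((latticeCoset_injective 0 0).hasSum_range_iff.2 h₀).add_isCompl
    (isCompl_range_latticeCoset h) ((latticeCoset_injective c d).hasSum_range_iff.2 h₁)

section

variable {K : Type*} [Field K] {p a b : K} {i₁ i₂ j₁ j₂ I J L : ℤ}

theorem zpow_mul_mul_zpow_mul_div (hp : p ≠ 0) (ha : a ≠ 0) (hb : b ≠ 0)
    (hI : i₁ + i₂ = I) (hJ : j₁ + j₂ = J) (hL : j₁ - j₂ = L) :
    p ^ i₁ * (a * b) ^ j₁ * (p ^ i₂ * (a / b) ^ j₂) = p ^ I * a ^ J * b ^ L := by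
  subst hI hJ hL
  rw [mul_zpow, div_zpow, zpow_add₀ hp, zpow_add₀ ha, zpow_sub₀ hb]
  field_simp

/-- Taking `q = p ^ c` as a hypothesis lets the lemma match the prefactors `p` and `p ^ 2`. -/
theorem mul_zpow_mul_mul_zpow_mul_div {q : K} (hp : p ≠ 0) (ha : a ≠ 0) (hb : b ≠ 0) (c : ℤ)
    (hq : q = p ^ c) (hI : c + i₁ + i₂ = I) (hJ : j₁ + j₂ = J) (hL : j₁ - j₂ = L) :
    q * (p ^ i₁ * (a * b) ^ j₁ * (p ^ i₂ * (a / b) ^ j₂)) = p ^ I * a ^ J * b ^ L := by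
  rw [zpow_mul_mul_zpow_mul_div hp ha hb rfl hJ hL, ← hI, add_assoc, zpow_add₀ hp c, hq]
  ring

end

theorem I_mul_zpow_two_mul (z : ℂ) (m : ℤ) : (I * z) ^ (2 * m) = (-1) ^ m * z ^ (2 * m) := by
  rw [mul_zpow, zpow_mul, zpow_ofNat, I_sq]

theorem I_mul_zpow_two_mul_add_one {z : ℂ} (hz : z ≠ 0) (m : ℤ) :
    (I * z) ^ (2 * m + 1) = (-1) ^ m * I * z ^ (2 * m + 1) := by
  rw [zpow_add_one₀ (mul_ne_zero I_ne_zero hz), I_mul_zpow_two_mul, zpow_add_one₀ hz]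
  ring

theorem I_mul_mul_I_mul (a b : ℂ) : I * a * (I * b) = -(a * b) := by
  linear_combination a * b * I_sq

noncomputable def evenTheta (p z : ℂ) : ℂ := ∑' r : ℤ, p ^ (4 * r ^ 2) * z ^ (2 * r)

noncomputable def oddTheta (p z : ℂ) : ℂ :=
  ∑' r : ℤ, p ^ (4 * r ^ 2 + 4 * r) * z ^ (2 * r + 1)

theorem evenTheta_neg (p z : ℂ) : evenTheta p (-z) = evenTheta p z := by
  simp only [evenTheta, (even_two_mul _).neg_zpow]

theorem oddTheta_neg (p z : ℂ) : oddTheta p (-z) = -oddTheta p z := by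
  simp only [oddTheta, (odd_two_mul_add_one _).neg_zpow, mul_neg, tsum_neg]

section

variable {p a b : ℂ}

theorem summable_norm_evenTheta_term (hp : ‖p‖ < 1) (z : ℂ) :
    Summable fun r : ℤ => ‖p ^ (4 * r ^ 2) * z ^ (2 * r)‖ := by
  have hp4 : ‖p ^ (4 : ℤ)‖ < 1 := by
    simpa using pow_lt_one₀ (norm_nonneg p) hp four_ne_zero
  simpa only [zpow_mul] using summable_norm_zpow_sq_mul_zpow hp4 (z ^ (2 : ℤ))

theorem summable_norm_oddTheta_term (hp : ‖p‖ < 1) (hp0 : p ≠ 0) {z : ℂ} (hz : z ≠ 0) :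
    Summable fun r : ℤ => ‖p ^ (4 * r ^ 2 + 4 * r) * z ^ (2 * r + 1)‖ := by
  refine ((summable_norm_evenTheta_term hp (p ^ (2 : ℤ) * z)).mul_right ‖z‖).congr fun r => ?_
  rw [← norm_mul, zpow_add₀ hp0, zpow_add_one₀ hz, mul_zpow, ← zpow_mul]
  ring_nf

theorem hasSum_double_even (hp : ‖p‖ < 1) (hp0 : p ≠ 0) (ha : a ≠ 0) (hb : b ≠ 0) :
    HasSum (fun x : ℤ × ℤ => p ^ (2 * (x.1 ^ 2 + x.2 ^ 2)) * a ^ (2 * x.1) * b ^ (2 * x.2))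
      (evenTheta p (a * b) * evenTheta p (a / b)
        + p ^ 2 * (oddTheta p (a * b) * oddTheta p (a / b))) := by
  have hu : a * b ≠ 0 := mul_ne_zero ha hb
  have hv : a / b ≠ 0 := div_ne_zero ha hb
  refine HasSum.add_latticeCoset (c := 1) (d := 0) (by simp) ?_ ?_
  · refine (hasSum_mul_of_summable_norm (summable_norm_evenTheta_term hp _)
      (summable_norm_evenTheta_term hp _)).congr_fun fun x => ?_
    simp only [Function.comp_apply, latticeCoset]
    exact (zpow_mul_mul_zpow_mul_div hp0 ha hb (by ring) (by ring) (by ring)).symm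
  · refine ((hasSum_mul_of_summable_norm (summable_norm_oddTheta_term hp hp0 hu)
      (summable_norm_oddTheta_term hp hp0 hv)).mul_left (p ^ 2)).congr_fun fun x => ?_
    simp only [Function.comp_apply, latticeCoset]
    exact (mul_zpow_mul_mul_zpow_mul_div hp0 ha hb 2 (zpow_ofNat p 2).symm
      (by ring) (by ring) (by ring)).symm

theorem hasSum_double_odd (hp : ‖p‖ < 1) (hp0 : p ≠ 0) (ha : a ≠ 0) (hb : b ≠ 0) :
    HasSum (fun x : ℤ × ℤ =>
        p ^ (2 * (x.1 ^ 2 + x.2 ^ 2 + x.1 + x.2) + 1) * a ^ (2 * x.1 + 1) * b ^ (2 * x.2 + 1))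
      (p * (oddTheta p (a * b) * evenTheta p (a / b))
        + p * (evenTheta p (a * b) * oddTheta p (a / b))) := by
  have hu : a * b ≠ 0 := mul_ne_zero ha hb
  have hv : a / b ≠ 0 := div_ne_zero ha hb
  refine HasSum.add_latticeCoset (c := 0) (d := -1) (by simp) ?_ ?_
  · refine ((hasSum_mul_of_summable_norm (summable_norm_oddTheta_term hp hp0 hu)
      (summable_norm_evenTheta_term hp _)).mul_left p).congr_fun fun x => ?_
    simp only [Function.comp_apply, latticeCoset]
    exact (mul_zpow_mul_mul_zpow_mul_div hp0 ha hb 1 (zpow_one p).symm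
      (by ring) (by ring) (by ring)).symm
  · refine ((hasSum_mul_of_summable_norm (summable_norm_evenTheta_term hp _)
      (summable_norm_oddTheta_term hp hp0 hv)).mul_left p).congr_fun fun x => ?_
    simp only [Function.comp_apply, latticeCoset]
    exact (mul_zpow_mul_mul_zpow_mul_div hp0 ha hb 1 (zpow_one p).symm
      (by ring) (by ring) (by ring)).symm

theorem tsum_double_even (hp : ‖p‖ < 1) (hp0 : p ≠ 0) (ha : a ≠ 0) (hb : b ≠ 0) :
    ∑' m : ℤ, ∑' n : ℤ, p ^ (2 * (m ^ 2 + n ^ 2)) * a ^ (2 * m) * b ^ (2 * n)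
      = evenTheta p (a * b) * evenTheta p (a / b)
        + p ^ 2 * (oddTheta p (a * b) * oddTheta p (a / b)) :=
  (hasSum_double_even hp hp0 ha hb).tsum_tsum_eq

theorem tsum_double_odd (hp : ‖p‖ < 1) (hp0 : p ≠ 0) (ha : a ≠ 0) (hb : b ≠ 0) :
    ∑' m : ℤ, ∑' n : ℤ,
        p ^ (2 * (m ^ 2 + n ^ 2 + m + n) + 1) * a ^ (2 * m + 1) * b ^ (2 * n + 1)
      = p * (oddTheta p (a * b) * evenTheta p (a / b))
        + p * (evenTheta p (a * b) * oddTheta p (a / b)) :=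
  (hasSum_double_odd hp hp0 ha hb).tsum_tsum_eq

theorem tsum_double_even_alternating
    (hp : ‖p‖ < 1) (hp0 : p ≠ 0) (ha : a ≠ 0) (hb : b ≠ 0) :
    ∑' m : ℤ, ∑' n : ℤ,
        (-1 : ℂ) ^ (m + n) * p ^ (2 * (m ^ 2 + n ^ 2)) * a ^ (2 * m) * b ^ (2 * n)
      = evenTheta p (a * b) * evenTheta p (a / b)
        - p ^ 2 * (oddTheta p (a * b) * oddTheta p (a / b)) := by
  calc _ = ∑' m : ℤ, ∑' n : ℤ,
        p ^ (2 * (m ^ 2 + n ^ 2)) * (I * a) ^ (2 * m) * (I * b) ^ (2 * n) := by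
        refine tsum_congr fun m => tsum_congr fun n => ?_
        rw [I_mul_zpow_two_mul, I_mul_zpow_two_mul, zpow_add₀ (by norm_num)]
        ring
    _ = _ := by
        rw [tsum_double_even hp hp0 (mul_ne_zero I_ne_zero ha) (mul_ne_zero I_ne_zero hb),
          I_mul_mul_I_mul, mul_div_mul_left a b I_ne_zero, evenTheta_neg, oddTheta_neg]
        ring

theorem tsum_double_odd_alternating
    (hp : ‖p‖ < 1) (hp0 : p ≠ 0) (ha : a ≠ 0) (hb : b ≠ 0) :
    ∑' m : ℤ, ∑' n : ℤ, (-1 : ℂ) ^ (m + n) *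
        p ^ (2 * (m ^ 2 + n ^ 2 + m + n) + 1) * a ^ (2 * m + 1) * b ^ (2 * n + 1)
      = p * (oddTheta p (a * b) * evenTheta p (a / b))
        - p * (evenTheta p (a * b) * oddTheta p (a / b)) := by
  calc _ = -∑' m : ℤ, ∑' n : ℤ,
        p ^ (2 * (m ^ 2 + n ^ 2 + m + n) + 1) * (I * a) ^ (2 * m + 1)
          * (I * b) ^ (2 * n + 1) := by
        simp only [← tsum_neg]
        refine tsum_congr fun m => tsum_congr fun n => ?_
        rw [I_mul_zpow_two_mul_add_one ha, I_mul_zpow_two_mul_add_one hb,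
          zpow_add₀ (by norm_num)]
        linear_combination (-1 : ℂ) ^ m * (-1) ^ n *
          p ^ (2 * (m ^ 2 + n ^ 2 + m + n) + 1) * a ^ (2 * m + 1) * b ^ (2 * n + 1) * I_sq
    _ = _ := by
        rw [tsum_double_odd hp hp0 (mul_ne_zero I_ne_zero ha) (mul_ne_zero I_ne_zero hb),
          I_mul_mul_I_mul, mul_div_mul_left a b I_ne_zero, evenTheta_neg, oddTheta_neg]
        ring

end

theorem neg_one_zpow_mul_zero_zpow {K : Type*} [DivisionRing K] (m n : ℤ) :
    (-1 : K) ^ (m + n) * 0 ^ (2 * (m ^ 2 + n ^ 2)) = 0 ^ (2 * (m ^ 2 + n ^ 2)) := by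
  rcases eq_or_ne (m ^ 2 + n ^ 2) 0 with h | h
  · obtain ⟨rfl, rfl⟩ : m = 0 ∧ n = 0 := by constructor <;> nlinarith
    simp
  · rw [zero_zpow _ (mul_ne_zero two_ne_zero h), mul_zero]

/-- Two-variable generalization of Jacobi's identity
(written with `q = p²`, `x = a²`, `y = b²` to clear fractional exponents). -/
theorem jacobi_two_variable (p a b : ℂ) (hp : ‖p‖ < 1)
    (ha : a ≠ 0) (hb : b ≠ 0) :
    (∑' m : ℤ, ∑' n : ℤ, (-1 : ℂ) ^ (m + n) *
        p ^ (2 * (m ^ 2 + n ^ 2 + m + n) + 1) * a ^ (2 * m + 1) * b ^ (2 * n + 1)) ^ 2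
      + (∑' m : ℤ, ∑' n : ℤ, p ^ (2 * (m ^ 2 + n ^ 2)) * a ^ (2 * m) * b ^ (2 * n)) ^ 2
      = (∑' m : ℤ, ∑' n : ℤ,
          p ^ (2 * (m ^ 2 + n ^ 2 + m + n) + 1) * a ^ (2 * m + 1) * b ^ (2 * n + 1)) ^ 2
        + (∑' m : ℤ, ∑' n : ℤ, (-1 : ℂ) ^ (m + n) *
            p ^ (2 * (m ^ 2 + n ^ 2)) * a ^ (2 * m) * b ^ (2 * n)) ^ 2 := by
  rcases eq_or_ne p 0 with rfl | hp0
  · have hodd (m n : ℤ) : (0 : ℂ) ^ (2 * (m ^ 2 + n ^ 2 + m + n) + 1) = 0 :=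
      zero_zpow _ (by omega)
    simp only [hodd, neg_one_zpow_mul_zero_zpow, mul_zero, zero_mul]
  · rw [tsum_double_odd_alternating hp hp0 ha hb, tsum_double_even hp hp0 ha hb,
      tsum_double_odd hp hp0 ha hb, tsum_double_even_alternating hp hp0 ha hb]
    ring
end

section
/- Let τ ∈ ℂ with Im τ > 0. The three entire functions of z ∈ ℂ given by f₁(z) = θ₁(3z|3τ), f₂(z) = exp(2iz)·θ₁(3z+πτ|3τ), and f₃(z) = exp(−2iz)·θ₁(3z−πτ|3τ) are linearly independent over ℂ: if c₁, c₂, c₃ ∈ ℂ satisfy c₁f₁(z) + c₂f₂(z) + c₃f₃(z) = 0 for all z ∈ ℂ, then c₁ = c₂ = c₃ = 0. -/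
open Complex

/-- The Jacobi theta function θ₁(z|τ). -/
noncomputable def theta1 (z τ : ℂ) : ℂ :=
  -Complex.I * ∑' n : ℤ, (-1 : ℂ) ^ n *
    Complex.exp (Real.pi * Complex.I * τ * (2 * (n : ℂ) + 1) ^ 2 / 4) *
    Complex.exp ((2 * (n : ℂ) + 1) * Complex.I * z)

/-! Translating `z` by `π/3` multiplies `θ₁(3z + kπτ | 3τ)` by `-1` and `e^{2ikz}` by `ω^k`,
`ω = e^{2πi/3}`. So the three functions (`k = 0, 1, -1`) are eigenvectors of this translation
with the distinct eigenvalues `-1, -ω, -ω⁻¹`, hence linearly independent once they are nonzero.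
That `θ₁` is not identically zero comes from writing it through `jacobiTheta₂`, whose integral
over a real period is its constant Fourier coefficient `1`. -/

lemma theta1_add_pi (z τ : ℂ) : theta1 (z + Real.pi) τ = -theta1 z τ := by
  have hodd (n : ℤ) : exp ((2 * (n : ℂ) + 1) * I * (z + Real.pi))
      = -exp ((2 * (n : ℂ) + 1) * I * z) := by
    rw [show (2 * (n : ℂ) + 1) * I * (z + Real.pi)
        = (2 * (n : ℂ) + 1) * I * z + (n * (2 * Real.pi * I) + Real.pi * I) by ring,
      exp_add, exp_add, exp_int_mul_two_pi_mul_I, exp_pi_mul_I]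
    ring
  simp only [theta1, hodd, mul_neg, tsum_neg]

lemma theta1_eq_jacobiTheta₂ (z τ : ℂ) :
    theta1 z τ = -I * exp (Real.pi * I * τ / 4 + I * z) *
      jacobiTheta₂ (z / Real.pi + τ / 2 + 1 / 2) τ := by
  have hπ : (Real.pi : ℂ) ≠ 0 := ofReal_ne_zero.mpr Real.pi_ne_zero
  rw [theta1, jacobiTheta₂, mul_assoc (-I), ← tsum_mul_left (a := cexp _)]
  refine congrArg (-I * ·) (tsum_congr fun n => ?_)
  rw [← exp_pi_mul_I, ← exp_int_mul, jacobiTheta₂_term, ← exp_add, ← exp_add, ← exp_add]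
  congr 1
  field_simp
  ring

lemma intervalIntegral_jacobiTheta₂_term (n : ℤ) (τ : ℂ) :
    ∫ x in (0 : ℝ)..1, jacobiTheta₂_term n x τ = if n = 0 then 1 else 0 := by
  split_ifs with hn
  · simp [hn, jacobiTheta₂_term]
  have hc : 2 * Real.pi * I * n ≠ 0 := by simp [Real.pi_ne_zero, hn]
  have hterm (x : ℝ) : jacobiTheta₂_term n x τ
      = exp (Real.pi * I * n ^ 2 * τ) * exp (2 * Real.pi * I * n * x) := by
    rw [jacobiTheta₂_term, ← exp_add]
    ring_nf
  simp only [hterm, intervalIntegral.integral_const_mul, integral_exp_mul_complex hc]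
  rw [show 2 * (Real.pi : ℂ) * I * n * (1 : ℝ) = n * (2 * Real.pi * I) by push_cast; ring,
    exp_int_mul_two_pi_mul_I]
  simp

lemma intervalIntegral_jacobiTheta₂ {τ : ℂ} (hτ : 0 < τ.im) :
    ∫ x in (0 : ℝ)..1, jacobiTheta₂ x τ = 1 := by
  have hnorm (n : ℤ) (x : ℝ) : ‖jacobiTheta₂_term n x τ‖ = ‖jacobiTheta₂_term n 0 τ‖ := by
    simp [norm_jacobiTheta₂_term]
  have hsum : ∑' n : ℤ, ∫ x in (0 : ℝ)..1, jacobiTheta₂_term n x τ = 1 := by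
    simp [intervalIntegral_jacobiTheta₂_term]
  simp only [← hsum, intervalIntegral.integral_of_le zero_le_one, jacobiTheta₂]
  rw [MeasureTheory.integral_tsum_of_summable_integral_norm]
  · exact fun n => Continuous.integrableOn_Ioc (by unfold jacobiTheta₂_term; fun_prop)
  · simpa [hnorm] using ((summable_jacobiTheta₂_term_iff 0 τ).mpr hτ).norm

lemma exists_theta1_ne_zero {τ : ℂ} (hτ : 0 < τ.im) : ∃ w : ℂ, theta1 w τ ≠ 0 := by
  obtain ⟨x, hx⟩ : ∃ x : ℝ, jacobiTheta₂ x τ ≠ 0 := by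
    by_contra! h
    simpa [h] using intervalIntegral_jacobiTheta₂ hτ
  refine ⟨Real.pi * (x - τ / 2 - 1 / 2), ?_⟩
  have hπ : (Real.pi : ℂ) ≠ 0 := ofReal_ne_zero.mpr Real.pi_ne_zero
  rw [theta1_eq_jacobiTheta₂,
    show Real.pi * (x - τ / 2 - 1 / 2) / Real.pi + τ / 2 + 1 / 2 = (x : ℂ) by field_simp; ring]
  simp [hx, exp_ne_zero]

noncomputable def theta1Twist (N : ℕ) (τ : ℂ) (k : ℤ) (z : ℂ) : ℂ :=
  exp (2 * k * I * z) * theta1 (N * z + k * Real.pi * τ) (N * τ)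

lemma theta1Twist_add_pi_div {N : ℕ} (hN : N ≠ 0) (τ : ℂ) (k : ℤ) (z : ℂ) :
    theta1Twist N τ k (z + Real.pi / N)
      = -exp (2 * Real.pi * I / N) ^ k * theta1Twist N τ k z := by
  have hN' : (N : ℂ) ≠ 0 := Nat.cast_ne_zero.mpr hN
  have hexp : exp (2 * k * I * (z + Real.pi / N))
      = exp (2 * Real.pi * I / N) ^ k * exp (2 * k * I * z) := by
    rw [← exp_int_mul, ← exp_add]
    congr 1
    field_simp
    ring
  rw [theta1Twist, theta1Twist, hexp, show N * (z + Real.pi / N) + k * Real.pi * τ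
    = N * z + k * Real.pi * τ + Real.pi by field_simp; ring, theta1_add_pi]
  ring

lemma theta1Twist_ne_zero {N : ℕ} (hN : N ≠ 0) {τ : ℂ} (hτ : 0 < τ.im) (k : ℤ) :
    theta1Twist N τ k ≠ 0 := by
  have hN' : (N : ℂ) ≠ 0 := Nat.cast_ne_zero.mpr hN
  obtain ⟨w, hw⟩ := exists_theta1_ne_zero (τ := N * τ)
    (by simpa [Nat.pos_of_ne_zero hN] using hτ)
  intro h0
  have := congrFun h0 ((w - k * Real.pi * τ) / N)
  rw [theta1Twist,
    show N * ((w - k * Real.pi * τ) / N) + k * Real.pi * τ = w by field_simp; ring] at this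
  simp_all [exp_ne_zero]

lemma hasEigenvector_theta1Twist {N : ℕ} (hN : N ≠ 0) {τ : ℂ} (hτ : 0 < τ.im) (k : ℤ) :
    Module.End.HasEigenvector (LinearMap.funLeft ℂ ℂ (· + (Real.pi / N : ℂ)))
      (-exp (2 * Real.pi * I / N) ^ k) (theta1Twist N τ k) :=
  Module.End.hasEigenvector_iff.mpr ⟨Module.End.mem_eigenspace_iff.mpr <|
    funext (theta1Twist_add_pi_div hN τ k), theta1Twist_ne_zero hN hτ k⟩

theorem linearIndependent_theta1Twist {N : ℕ} (hN : N ≠ 0) {τ : ℂ} (hτ : 0 < τ.im)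
    {ι : Type*} {k : ι → ℤ} (hk : Function.Injective fun i => (k i : ZMod N)) :
    LinearIndependent ℂ fun i => theta1Twist N τ (k i) := by
  have hζ := Complex.isPrimitiveRoot_exp N hN
  refine Module.End.eigenvectors_linearIndependent' _ (fun i => -exp (2 * Real.pi * I / N) ^ k i)
    (fun i j hij => hk ?_) _ fun i => hasEigenvector_theta1Twist hN hτ (k i)
  rw [ZMod.intCast_eq_intCast_iff_dvd_sub, ← hζ.zpow_eq_one_iff_dvd, zpow_sub₀ (exp_ne_zero _),
    div_eq_one_iff_eq (zpow_ne_zero _ (exp_ne_zero _))]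
  exact (neg_inj.mp hij).symm

/-- The functions `θ₁(3z|3τ)`, `e^{2iz} θ₁(3z+πτ|3τ)` and `e^{-2iz} θ₁(3z-πτ|3τ)`
are linearly independent over ℂ. -/
theorem theta1_linearly_independent (τ : ℂ) (hτ : 0 < τ.im) (c₁ c₂ c₃ : ℂ)
    (h : ∀ z : ℂ,
      c₁ * theta1 (3 * z) (3 * τ)
        + c₂ * Complex.exp (2 * Complex.I * z) * theta1 (3 * z + Real.pi * τ) (3 * τ)
        + c₃ * Complex.exp (-2 * Complex.I * z) * theta1 (3 * z - Real.pi * τ) (3 * τ) = 0) :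
    c₁ = 0 ∧ c₂ = 0 ∧ c₃ = 0 := by
  have hind := linearIndependent_theta1Twist (N := 3) three_ne_zero hτ (k := ![0, 1, -1])
    (by decide)
  have hsum : ∑ i, ![c₁, c₂, c₃] i • theta1Twist 3 τ (![0, 1, -1] i) = 0 := by
    ext z
    simpa [Fin.sum_univ_three, theta1Twist, sub_eq_add_neg, mul_assoc] using h z
  have hc := Fintype.linearIndependent_iff.mp hind _ hsum
  exact ⟨hc 0, hc 1, hc 2⟩
end

section
/- Let τ ∈ ℂ with Im τ > 0 and let x, y, z ∈ ℂ. Then θ₁(z+x|τ)·θ₁(z+y|τ)·θ₁(z−x−y|τ) = −A(x,y|τ)·θ₁(3z|3τ) + exp(iπτ/3)·C(−x,−y|τ)·exp(2iz)·θ₁(3z+πτ|3τ) + exp(iπτ/3)·C(x,y|τ)·exp(−2iz)·θ₁(3z−πτ|3τ). -/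
open Complex

/-- The theta series A(x,y|τ). -/
noncomputable def Afun (x y τ : ℂ) : ℂ :=
  ∑' k : ℤ, ∑' l : ℤ,
    Complex.exp (2 * Complex.I * Real.pi * τ * ((k : ℂ) ^ 2 + (k : ℂ) * (l : ℂ) + (l : ℂ) ^ 2)) *
    Complex.exp (2 * Complex.I * x * (2 * (l : ℂ) + (k : ℂ))) *
    Complex.exp (2 * Complex.I * y * (2 * (k : ℂ) + (l : ℂ)))

/-- The theta series C(x,y|τ). -/
noncomputable def Cfun (x y τ : ℂ) : ℂ :=
  Complex.exp (2 * Complex.I * (x + y)) * ∑' k : ℤ, ∑' l : ℤ,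
    Complex.exp (2 * Complex.I * Real.pi * τ *
      ((k : ℂ) ^ 2 + (k : ℂ) * (l : ℂ) + (l : ℂ) ^ 2 + (k : ℂ) + (l : ℂ) + 1 / 3)) *
    Complex.exp (2 * Complex.I * x * (2 * (l : ℂ) + (k : ℂ))) *
    Complex.exp (2 * Complex.I * y * (2 * (k : ℂ) + (l : ℂ)))

/-!
Multiplying out the three θ₁-series gives an absolutely convergent series over `(a, b, c) ∈ ℤ³`.
Sort it by the residue of `a + b + c` modulo 3, writing `a = m + l`, `b = m + k`,
`c = m - k - l + ρ` with `ρ ∈ {0, 1, -1}`. For `ρ = 0`,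
`(2a+1)² + (2b+1)² + (2c+1)² = 3(2m+1)² + 8(k² + kl + l²)` and
`(2a+1)(z+x) + (2b+1)(z+y) + (2c+1)(z-x-y) = (2m+1)·3z + 2x(2l+k) + 2y(2k+l)`,
so each term is a θ₁-term in `m` for `(3z | 3τ)` times a term of the series `A`; for `ρ = ±1` the
extra terms shift `3z` by `±πτ` and turn `A` into `C`. Summing over `m` and `(k, l)` separately
gives the three terms of the expansion.
-/

section TripleSums

variable {α β γ R : Type*} [NormedRing R] [CompleteSpace R]

lemma summable_mul_mul_of_summable_norm {f : α → R} {g : β → R} {h : γ → R}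
    (hf : Summable fun a => ‖f a‖) (hg : Summable fun b => ‖g b‖)
    (hh : Summable fun c => ‖h c‖) :
    Summable fun p : α × β × γ => f p.1 * g p.2.1 * h p.2.2 := by
  simpa only [mul_assoc] using summable_mul_of_summable_norm hf (hg.mul_norm hh)

lemma tsum_mul_tsum_mul_tsum_of_summable_norm {f : α → R} {g : β → R} {h : γ → R}
    (hf : Summable fun a => ‖f a‖) (hg : Summable fun b => ‖g b‖)
    (hh : Summable fun c => ‖h c‖) :
    (∑' a, f a) * (∑' b, g b) * (∑' c, h c) =
      ∑' p : α × β × γ, f p.1 * g p.2.1 * h p.2.2 := by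
  rw [mul_assoc, tsum_mul_tsum_of_summable_norm hg hh,
    tsum_mul_tsum_of_summable_norm hf (hg.mul_norm hh)]
  simp only [mul_assoc]

lemma Summable.tsum_eq_sum_tsum_tsum_tsum_of_equiv {E ι δ : Type*} [NormedAddCommGroup E]
    [CompleteSpace E] [Fintype ι] (e : ι × α × β × γ ≃ δ) {f : δ → E}
    (hf : Summable f) : ∑' d, f d = ∑ i, ∑' a, ∑' b, ∑' c, f (e (i, a, b, c)) := by
  have he : Summable fun q => f (e q) := e.summable_iff.mpr hf
  rw [← e.tsum_eq, he.tsum_prod, tsum_fintype]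
  refine Finset.sum_congr rfl fun i _ => ?_
  have hi := he.prod_factor i
  rw [hi.tsum_prod]
  exact tsum_congr fun a => (hi.prod_factor a).tsum_prod

end TripleSums

noncomputable def theta1Term (w τ : ℂ) (n : ℤ) : ℂ :=
  (-1 : ℂ) ^ n * exp (Real.pi * I * τ * (2 * (n : ℂ) + 1) ^ 2 / 4) *
    exp ((2 * (n : ℂ) + 1) * I * w)

noncomputable def aTerm (x y τ : ℂ) (k l : ℤ) : ℂ :=
  exp (2 * I * Real.pi * τ * ((k : ℂ) ^ 2 + (k : ℂ) * (l : ℂ) + (l : ℂ) ^ 2)) *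
    exp (2 * I * x * (2 * (l : ℂ) + (k : ℂ))) * exp (2 * I * y * (2 * (k : ℂ) + (l : ℂ)))

noncomputable def cTerm (x y τ : ℂ) (k l : ℤ) : ℂ :=
  exp (2 * I * Real.pi * τ *
      ((k : ℂ) ^ 2 + (k : ℂ) * (l : ℂ) + (l : ℂ) ^ 2 + (k : ℂ) + (l : ℂ) + 1 / 3)) *
    exp (2 * I * x * (2 * (l : ℂ) + (k : ℂ))) * exp (2 * I * y * (2 * (k : ℂ) + (l : ℂ)))

lemma theta1_eq_tsum (w τ : ℂ) : theta1 w τ = -I * ∑' n, theta1Term w τ n := rfl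

lemma Afun_eq_tsum (x y τ : ℂ) : Afun x y τ = ∑' k, ∑' l, aTerm x y τ k l := rfl

lemma Cfun_eq_tsum (x y τ : ℂ) :
    Cfun x y τ = exp (2 * I * (x + y)) * ∑' k, ∑' l, cTerm x y τ k l := rfl

lemma neg_one_zpow_eq_exp (n : ℤ) : (-1 : ℂ) ^ n = exp (n * (Real.pi * I)) := by
  rw [exp_int_mul, exp_pi_mul_I]

lemma theta1Term_eq_mul_jacobiTheta₂_term (w τ : ℂ) (n : ℤ) :
    theta1Term w τ n = exp (Real.pi * I * τ / 4 + I * w) *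
      jacobiTheta₂_term n ((1 + τ) / 2 + w / Real.pi) τ := by
  have hπ : (Real.pi : ℂ) ≠ 0 := ofReal_ne_zero.2 Real.pi_ne_zero
  rw [theta1Term, jacobiTheta₂_term, neg_one_zpow_eq_exp, ← exp_add, ← exp_add, ← exp_add]
  congr 1
  field_simp
  ring

lemma summable_norm_theta1Term {τ : ℂ} (hτ : 0 < τ.im) (w : ℂ) :
    Summable fun n => ‖theta1Term w τ n‖ := by
  simp only [summable_norm_iff, theta1Term_eq_mul_jacobiTheta₂_term]
  exact ((summable_jacobiTheta₂_term_iff _ τ).2 hτ).mul_left _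

noncomputable def theta1TripleTerm (u v w τ : ℂ) (p : ℤ × ℤ × ℤ) : ℂ :=
  theta1Term u τ p.1 * theta1Term v τ p.2.1 * theta1Term w τ p.2.2

lemma summable_theta1TripleTerm {τ : ℂ} (hτ : 0 < τ.im) (u v w : ℂ) :
    Summable (theta1TripleTerm u v w τ) :=
  summable_mul_mul_of_summable_norm (summable_norm_theta1Term hτ u)
    (summable_norm_theta1Term hτ v) (summable_norm_theta1Term hτ w)

lemma theta1_mul_theta1_mul_theta1 {τ : ℂ} (hτ : 0 < τ.im) (u v w : ℂ) :
    theta1 u τ * theta1 v τ * theta1 w τ = I * ∑' p, theta1TripleTerm u v w τ p := by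
  simp only [theta1_eq_tsum, theta1TripleTerm]
  rw [← tsum_mul_tsum_mul_tsum_of_summable_norm (summable_norm_theta1Term hτ u)
    (summable_norm_theta1Term hτ v) (summable_norm_theta1Term hτ w)]
  linear_combination (-I * ((∑' n, theta1Term u τ n) * (∑' n, theta1Term v τ n) *
    (∑' n, theta1Term w τ n))) * I_mul_I

def centeredResidue : Fin 3 → ℤ
  | 0 => 0
  | 1 => 1
  | 2 => -1

def residueClassEquiv : Fin 3 × ℤ × ℤ × ℤ ≃ ℤ × ℤ × ℤ where
  toFun q := (q.2.1 + q.2.2.2, q.2.1 + q.2.2.1, q.2.1 - q.2.2.1 - q.2.2.2 + centeredResidue q.1)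
  invFun p :=
    let s := p.1 + p.2.1 + p.2.2
    (if s % 3 = 0 then 0 else if s % 3 = 1 then 1 else 2,
      (s + 1) / 3, p.2.1 - (s + 1) / 3, p.1 - (s + 1) / 3)
  left_inv := by
    rintro ⟨r, m, k, l⟩
    fin_cases r <;> dsimp only [centeredResidue] <;> split_ifs <;> first
      | omega
      | (refine Prod.ext ?_ (Prod.ext ?_ (Prod.ext ?_ ?_)) <;> first | rfl | (dsimp only; omega))
  right_inv := by
    rintro ⟨a, b, c⟩
    dsimp only
    split_ifs <;> refine Prod.ext ?_ (Prod.ext ?_ ?_) <;> dsimp only [centeredResidue] <;> omega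

section ResidueClasses

variable (x y z τ : ℂ)

lemma theta1TripleTerm_residueClassEquiv_zero (m k l : ℤ) :
    theta1TripleTerm (z + x) (z + y) (z - x - y) τ (residueClassEquiv (0, m, k, l)) =
      theta1Term (3 * z) (3 * τ) m * aTerm x y τ k l := by
  change theta1Term (z + x) τ (m + l) * theta1Term (z + y) τ (m + k) *
    theta1Term (z - x - y) τ (m - k - l + 0) = _
  simp only [theta1Term, aTerm, neg_one_zpow_eq_exp, ← exp_add]
  exact exp_eq_exp_iff_exists_int.2 ⟨m, by push_cast; ring⟩

lemma theta1TripleTerm_residueClassEquiv_one (m k l : ℤ) :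
    theta1TripleTerm (z + x) (z + y) (z - x - y) τ (residueClassEquiv (1, m, k, l)) =
      exp (Real.pi * I) * exp (Real.pi * I * τ / 3) * exp (2 * I * (-x + -y)) *
        exp (2 * I * z) *
          (theta1Term (3 * z + Real.pi * τ) (3 * τ) m * cTerm (-x) (-y) τ (-k) (-l)) := by
  change theta1Term (z + x) τ (m + l) * theta1Term (z + y) τ (m + k) *
    theta1Term (z - x - y) τ (m - k - l + 1) = _
  simp only [theta1Term, cTerm, neg_one_zpow_eq_exp, ← exp_add]
  exact exp_eq_exp_iff_exists_int.2 ⟨m, by push_cast; ring⟩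

lemma theta1TripleTerm_residueClassEquiv_two (m k l : ℤ) :
    theta1TripleTerm (z + x) (z + y) (z - x - y) τ (residueClassEquiv (2, m, k, l)) =
      exp (Real.pi * I) * exp (Real.pi * I * τ / 3) * exp (2 * I * (x + y)) *
        exp (-2 * I * z) * (theta1Term (3 * z - Real.pi * τ) (3 * τ) m * cTerm x y τ k l) := by
  change theta1Term (z + x) τ (m + l) * theta1Term (z + y) τ (m + k) *
    theta1Term (z - x - y) τ (m - k - l + -1) = _
  simp only [theta1Term, cTerm, neg_one_zpow_eq_exp, ← exp_add]
  exact exp_eq_exp_iff_exists_int.2 ⟨m - 1, by push_cast; ring⟩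

lemma I_mul_tsum_residueClass_zero :
    I * ∑' m, ∑' k, ∑' l,
        theta1TripleTerm (z + x) (z + y) (z - x - y) τ (residueClassEquiv (0, m, k, l)) =
      -Afun x y τ * theta1 (3 * z) (3 * τ) := by
  simp only [theta1TripleTerm_residueClassEquiv_zero, tsum_mul_left, tsum_mul_right,
    Afun_eq_tsum, theta1_eq_tsum]
  ring

lemma I_mul_tsum_residueClass_one :
    I * ∑' m, ∑' k, ∑' l,
        theta1TripleTerm (z + x) (z + y) (z - x - y) τ (residueClassEquiv (1, m, k, l)) =
      exp (Real.pi * I * τ / 3) * Cfun (-x) (-y) τ * exp (2 * I * z) *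
        theta1 (3 * z + Real.pi * τ) (3 * τ) := by
  simp only [theta1TripleTerm_residueClassEquiv_one, tsum_mul_left, tsum_mul_right,
    tsum_comp_neg (cTerm _ _ _ _), tsum_comp_neg fun k => ∑' l, cTerm (-x) (-y) τ k l,
    Cfun_eq_tsum, theta1_eq_tsum, exp_pi_mul_I]
  ring

lemma I_mul_tsum_residueClass_two :
    I * ∑' m, ∑' k, ∑' l,
        theta1TripleTerm (z + x) (z + y) (z - x - y) τ (residueClassEquiv (2, m, k, l)) =
      exp (Real.pi * I * τ / 3) * Cfun x y τ * exp (-2 * I * z) *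
        theta1 (3 * z - Real.pi * τ) (3 * τ) := by
  simp only [theta1TripleTerm_residueClassEquiv_two, tsum_mul_left, tsum_mul_right,
    Cfun_eq_tsum, theta1_eq_tsum, exp_pi_mul_I]
  ring

end ResidueClasses

/-- Three-term theta expansion of the product `θ₁(z+x)θ₁(z+y)θ₁(z-x-y)`. -/
theorem theta1_product_expansion (τ : ℂ) (hτ : 0 < τ.im) (x y z : ℂ) :
    theta1 (z + x) τ * theta1 (z + y) τ * theta1 (z - x - y) τ
      = -Afun x y τ * theta1 (3 * z) (3 * τ)
        + Complex.exp (Real.pi * Complex.I * τ / 3) * Cfun (-x) (-y) τ *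
            Complex.exp (2 * Complex.I * z) * theta1 (3 * z + Real.pi * τ) (3 * τ)
        + Complex.exp (Real.pi * Complex.I * τ / 3) * Cfun x y τ *
            Complex.exp (-2 * Complex.I * z) * theta1 (3 * z - Real.pi * τ) (3 * τ) := by
  rw [theta1_mul_theta1_mul_theta1 hτ, Summable.tsum_eq_sum_tsum_tsum_tsum_of_equiv
      residueClassEquiv (summable_theta1TripleTerm hτ _ _ _), Fin.sum_univ_three, mul_add, mul_add,
    I_mul_tsum_residueClass_zero, I_mul_tsum_residueClass_one, I_mul_tsum_residueClass_two]
end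

section
/- Let b and d be integers with −2d < b < 2d, and let p, a, c ∈ ℂ with |p| < 1, a ≠ 0, c ≠ 0. Then (∑_{m,n∈ℤ} (−1)^{m+n} p^{4(dm²+bmn+dn²)+(4d+2b)(m+n)+2d+b} a^{2m+1} c^{2n+1})² + (∑_{m,n∈ℤ} p^{4(dm²+bmn+dn²)} a^{2m} c^{2n})² = (∑_{m,n∈ℤ} (−1)^{m+n} p^{4(dm²+bmn+dn²)} a^{2m} c^{2n})² + (∑_{m,n∈ℤ} p^{4(dm²+bmn+dn²)+(4d+2b)(m+n)+2d+b} a^{2m+1} c^{2n+1})². (This is the two-variable generalization with q = p⁴, x = a², y = c², clearing the fractional exponents q^{d(m+1/2)²+b(m+1/2)(n+1/2)+d(n+1/2)²} x^{m+1/2} y^{n+1/2}, using d(m+1/2)²+b(m+1/2)(n+1/2)+d(n+1/2)² = dm²+bmn+dn²+(d+b/2)(m+n)+d/2+b/4.) -/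
/-!
Put `M = m + n`, `K = m - n` on `ℤ²` and `M = m + n + 1`, `K = m - n` on its shift by `(½, ½)`:
together the two lattices are mapped bijectively onto `ℤ²`, the exponent of `p` becomes
`(2d + b) M² + (2d - b) K²`, and `a^{2m} c^{2n}` becomes `(ac)^M (a/c)^K`. Writing
`θ_α(x) = ∑_N p^{αN²} x^N`, `B, C` for the unshifted sums and `D, A` for the shifted ones, the sums
`B ± D` and `C ± A` are the four products `θ_{2d+b}(±ac) θ_{2d-b}(±a/c)`, whence
`(B + D)(B - D) = θ_{2d+b}(ac) θ_{2d+b}(-ac) θ_{2d-b}(a/c) θ_{2d-b}(-a/c) = (C + A)(C - A)`.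
-/

open Complex Real

theorem zpow_add_of_nonneg {G₀ : Type*} [GroupWithZero G₀] (a : G₀) {m n : ℤ} (hm : 0 ≤ m)
    (hn : 0 ≤ n) : a ^ (m + n) = a ^ m * a ^ n := by
  lift m to ℕ using hm
  lift n to ℕ using hn
  exact_mod_cast pow_add a m n

theorem zpow_sub_eq_zpow_add_of_sq_eq_one {G₀ : Type*} [GroupWithZero G₀] {t : G₀}
    (ht : t ^ 2 = 1) (m n : ℤ) :
    t ^ (m - n) = t ^ (m + n) := by
  have ht₀ : t ≠ 0 := by rintro rfl; norm_num at ht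
  rw [show m + n = m - n + 2 * n by ring, zpow_add₀ ht₀, zpow_mul, zpow_two, ← pow_two, ht,
    one_zpow, mul_one]

theorem mul_zpow_add_mul_zpow_sub {K : Type*} [Field K] {s t a c : K} (ht : t ^ 2 = 1)
    (ha : a ≠ 0) (hc : c ≠ 0) (m n : ℤ) :
    (s * (a * c)) ^ (m + n) * (t * (a / c)) ^ (m - n) =
      (s * t) ^ (m + n) * a ^ (2 * m) * c ^ (2 * n) := by
  rw [mul_zpow t, zpow_sub_eq_zpow_add_of_sq_eq_one ht]
  simp only [mul_zpow, div_zpow, two_mul, zpow_add₀ ha, zpow_add₀ hc, zpow_sub₀ ha, zpow_sub₀ hc]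
  field_simp

theorem sq_add_sq_eq_sq_add_sq_of_mul_eq {R : Type*} [CommRing R] {a b c d : R}
    (h : (b + d) * (b - d) = (c + a) * (c - a)) : a ^ 2 + b ^ 2 = c ^ 2 + d ^ 2 := by
  linear_combination h

def latticeSumEquiv : (ℤ × ℤ) ⊕ (ℤ × ℤ) ≃ ℤ × ℤ where
  toFun := Sum.elim (fun z => (z.1 + z.2, z.1 - z.2)) (fun z => (z.1 + z.2 + 1, z.1 - z.2))
  invFun w := if Even (w.1 + w.2) then .inl ((w.1 + w.2) / 2, (w.1 - w.2) / 2)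
    else .inr ((w.1 + w.2 - 1) / 2, (w.1 - w.2 - 1) / 2)
  left_inv := by
    rintro (⟨m, n⟩ | ⟨m, n⟩) <;> simp only [Sum.elim_inl, Sum.elim_inr, Int.even_iff] <;>
      split_ifs <;> first | omega | simp only [Sum.inl.injEq, Sum.inr.injEq, Prod.mk.injEq]; omega
  right_inv := by
    rintro ⟨M, K⟩
    simp only [Int.even_iff]
    split_ifs <;> simp only [Sum.elim_inl, Sum.elim_inr, Prod.mk.injEq] <;> omega

theorem Summable.tsum_eq_tsum_even_add_tsum_odd {E : Type*} [NormedAddCommGroup E]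
    [CompleteSpace E] {G : ℤ × ℤ → E} (hG : Summable G) :
    ∑' w, G w = ∑' m, ∑' n, G (m + n, m - n) + ∑' m, ∑' n, G (m + n + 1, m - n) := by
  have hGe := hG.comp_injective latticeSumEquiv.injective
  have h₁ := hGe.comp_injective Sum.inl_injective
  have h₂ := hGe.comp_injective Sum.inr_injective
  rw [← latticeSumEquiv.tsum_eq]
  exact (Summable.tsum_sum h₁ h₂).trans (congrArg₂ _ h₁.tsum_prod h₂.tsum_prod)

noncomputable def thetaSeries (q : ℂ) (α : ℤ) (x : ℂ) : ℂ := ∑' N : ℤ, q ^ (α * N ^ 2) * x ^ N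

theorem summable_thetaSeries_term {q x : ℂ} {α : ℤ} (hq : ‖q‖ < 1) (hα : 0 < α) (hx : x ≠ 0) :
    Summable fun N : ℤ => q ^ (α * N ^ 2) * x ^ N := by
  rcases eq_or_ne q 0 with rfl | hq₀
  · refine summable_of_ne_finset_zero (s := {0}) fun N hN => ?_
    have : N ≠ 0 := by simpa using hN
    rw [zero_zpow _ (by positivity), zero_mul]
  · set τ : ℂ := -(α * log q) * I / π
    set z : ℂ := -log x * I / (2 * π)
    have hτ : 0 < τ.im := by
      have hlog : Real.log ‖q‖ < 0 := Real.log_neg (norm_pos_iff.mpr hq₀) hq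
      have : τ.im = -(α * Real.log ‖q‖) / π := by simp [τ, log_re]
      rw [this]
      exact div_pos (neg_pos.mpr (mul_neg_of_pos_of_neg (by exact_mod_cast hα) hlog)) pi_pos
    refine ((summable_jacobiTheta₂_term_iff z τ).mpr hτ).congr fun N => ?_
    have h1 : 2 * π * I * N * z = N * log x := by
      simp only [z]; field_simp; linear_combination (-N * log x) * I_sq
    have h2 : π * I * N ^ 2 * τ = ((α * N ^ 2 : ℤ) : ℂ) * log q := by
      simp only [τ]; push_cast; field_simp; linear_combination (-N ^ 2 * α * log q) * I_sq
    rw [jacobiTheta₂_term, h1, h2, Complex.exp_add, exp_int_mul, exp_int_mul, exp_log hx,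
      exp_log hq₀, mul_comm]

theorem thetaSeries_mul_thetaSeries {q x y : ℂ} {α β : ℤ} (hq : ‖q‖ < 1) (hα : 0 < α)
    (hβ : 0 < β) (hx : x ≠ 0) (hy : y ≠ 0) :
    thetaSeries q α x * thetaSeries q β y =
      ∑' m : ℤ, ∑' n : ℤ,
          q ^ (α * (m + n) ^ 2) * x ^ (m + n) * (q ^ (β * (m - n) ^ 2) * y ^ (m - n)) +
        ∑' m : ℤ, ∑' n : ℤ,
          q ^ (α * (m + n + 1) ^ 2) * x ^ (m + n + 1) * (q ^ (β * (m - n) ^ 2) * y ^ (m - n)) := by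
  have hf := summable_norm_iff.mpr (summable_thetaSeries_term hq hα hx)
  have hg := summable_norm_iff.mpr (summable_thetaSeries_term hq hβ hy)
  rw [thetaSeries, thetaSeries, tsum_mul_tsum_of_summable_norm hf hg,
    (summable_mul_of_summable_norm hf hg).tsum_eq_tsum_even_add_tsum_odd]

theorem tsum_add_mul_tsum_eq_thetaSeries_mul {d b : ℤ} (hb1 : -(2 * d) < b) (hb2 : b < 2 * d)
    {p a c s t : ℂ} (hp : ‖p‖ < 1) (ha : a ≠ 0) (hc : c ≠ 0) (hs : s ≠ 0) (ht : t ^ 2 = 1) :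
    (∑' m : ℤ, ∑' n : ℤ, (s * t) ^ (m + n) *
        p ^ (4 * (d * m ^ 2 + b * m * n + d * n ^ 2)) * a ^ (2 * m) * c ^ (2 * n)) +
      s * ∑' m : ℤ, ∑' n : ℤ, (s * t) ^ (m + n) *
        p ^ (4 * (d * m ^ 2 + b * m * n + d * n ^ 2) + (4 * d + 2 * b) * (m + n) + 2 * d + b) *
        a ^ (2 * m + 1) * c ^ (2 * n + 1) =
      thetaSeries p (2 * d + b) (s * (a * c)) * thetaSeries p (2 * d - b) (t * (a / c)) := by
  have hsac : s * (a * c) ≠ 0 := by simp [*]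
  have ht₀ : t * (a / c) ≠ 0 := by
    have : t ≠ 0 := by rintro rfl; norm_num at ht
    simp [*]
  have hpow (m n : ℤ) : p ^ ((2 * d + b) * m ^ 2) * p ^ ((2 * d - b) * n ^ 2) =
      p ^ ((2 * d + b) * m ^ 2 + (2 * d - b) * n ^ 2) :=
    (zpow_add_of_nonneg p (mul_nonneg (by omega) (sq_nonneg _))
      (mul_nonneg (by omega) (sq_nonneg _))).symm
  rw [thetaSeries_mul_thetaSeries hp (by omega) (by omega) hsac ht₀, ← tsum_mul_left]
  congr 1 <;> refine tsum_congr fun m => ?_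
  · refine tsum_congr fun n => ?_
    rw [mul_mul_mul_comm, hpow, mul_zpow_add_mul_zpow_sub ht ha hc,
      show (2 * d + b) * (m + n) ^ 2 + (2 * d - b) * (m - n) ^ 2 =
        4 * (d * m ^ 2 + b * m * n + d * n ^ 2) by ring]
    ring
  · rw [← tsum_mul_left]
    refine tsum_congr fun n => ?_
    rw [mul_mul_mul_comm, hpow, zpow_add_one₀ hsac (m + n), mul_right_comm _ (s * (a * c)),
      mul_zpow_add_mul_zpow_sub ht ha hc, zpow_add_one₀ ha, zpow_add_one₀ hc,
      show (2 * d + b) * (m + n + 1) ^ 2 + (2 * d - b) * (m - n) ^ 2 =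
        4 * (d * m ^ 2 + b * m * n + d * n ^ 2) + (4 * d + 2 * b) * (m + n) + 2 * d + b by ring]
    ring

/-- Two-variable generalization of the Chan–Chan–Solé identity for the form
`d m² + b mn + d n²` (with `q = p⁴`, `x = a²`, `y = c²` clearing fractional exponents). -/
theorem gen_jacobi_two_variable (d b : ℤ) (hb1 : -(2 * d) < b) (hb2 : b < 2 * d)
    (p a c : ℂ) (hp : ‖p‖ < 1) (ha : a ≠ 0) (hc : c ≠ 0) :
    (∑' m : ℤ, ∑' n : ℤ, (-1 : ℂ) ^ (m + n) *
        p ^ (4 * (d * m ^ 2 + b * m * n + d * n ^ 2) + (4 * d + 2 * b) * (m + n) + 2 * d + b) *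
        a ^ (2 * m + 1) * c ^ (2 * n + 1)) ^ 2
      + (∑' m : ℤ, ∑' n : ℤ,
          p ^ (4 * (d * m ^ 2 + b * m * n + d * n ^ 2)) * a ^ (2 * m) * c ^ (2 * n)) ^ 2
      = (∑' m : ℤ, ∑' n : ℤ, (-1 : ℂ) ^ (m + n) *
          p ^ (4 * (d * m ^ 2 + b * m * n + d * n ^ 2)) * a ^ (2 * m) * c ^ (2 * n)) ^ 2
        + (∑' m : ℤ, ∑' n : ℤ,
            p ^ (4 * (d * m ^ 2 + b * m * n + d * n ^ 2) + (4 * d + 2 * b) * (m + n) + 2 * d + b) *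
            a ^ (2 * m + 1) * c ^ (2 * n + 1)) ^ 2 := by
  have key {s t : ℂ} (hs : s ≠ 0) (ht : t ^ 2 = 1) :=
    tsum_add_mul_tsum_eq_thetaSeries_mul hb1 hb2 hp ha hc hs ht
  have h₁ := key one_ne_zero (one_pow 2)
  have h₂ := key (neg_ne_zero.mpr one_ne_zero) neg_one_sq
  have h₃ := key one_ne_zero neg_one_sq
  have h₄ := key (neg_ne_zero.mpr one_ne_zero) (one_pow 2)
  simp only [mul_one, one_mul, neg_mul_neg, one_zpow, neg_one_mul, ← sub_eq_add_neg] at h₁ h₂ h₃ h₄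
  refine sq_add_sq_eq_sq_add_sq_of_mul_eq ?_
  rw [h₁, h₂, h₃, h₄]
  ring
end
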